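/- arXiv:2403.17023 — 2 statements merged into one kernel-verified Lean document; each statement's English description precedes it below -/
import Mathlib

section
/- Let $\nu$ be a finite Borel measure on a connected open set $U \subset \mathbb{C}^2$ such that $\underline{d}_\nu(x) \geq \gamma$ for $\nu$-almost every $x$, where $\gamma > 2$. Let $h$ be holomorphic on $U$. If $\nu\{x \in U : h(x) = 0\} > 0$, then $h \equiv 0$ on $U$. -/
/-!
Choose `2 < s < γ`. At `ν`-almost every point the balls of small radius `r` have mass at most
`r ^ s`, so by the mass distribution principle `ν ≪ μH[s]`. If `h ≢ 0` on the connected set `U`,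
its zero set has Hausdorff dimension at most `2 < s`, hence is `ν`-null. For the dimension bound,
write `(z, w)` for the coordinates: at a zero of `h`, either `h (z, ·)` vanishes identically,
which happens only for countably many `z`, or some `∂ⁿh/∂wⁿ` vanishes there while `∂ⁿ⁺¹h/∂wⁿ⁺¹`
does not. In the latter case the zero set of `∂ⁿh/∂wⁿ` is locally a Lipschitz graph over the
`z`-axis, the Lipschitz bound in `z` coming from Cauchy estimates.
-/

open MeasureTheory Filter Metric Set Topology
open scoped ENNReal NNReal

theorem dimH_le_of_forall_exists_nhdsWithin {X : Type*} [EMetricSpace X] [SecondCountableTopology X]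
    {s : Set X} {d : ℝ≥0∞} (h : ∀ x ∈ s, ∃ t ∈ 𝓝[s] x, dimH t ≤ d) : dimH s ≤ d := by
  by_contra! hlt
  obtain ⟨x, hx, hbig⟩ := exists_mem_nhdsWithin_lt_dimH_of_lt_dimH hlt
  obtain ⟨t, ht, htd⟩ := h x hx
  exact (hbig t ht).not_ge htd

theorem dimH_le_dimH_image_of_dist_le_mul {X Y : Type*} [MetricSpace X] [MetricSpace Y]
    {A : Set X} {p : X → Y} {K : ℝ≥0} (h : ∀ x ∈ A, ∀ y ∈ A, dist x y ≤ K * dist (p x) (p y)) :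
    dimH A ≤ dimH (p '' A) := by
  have hanti : AntilipschitzWith K (A.domRestrict p) :=
    AntilipschitzWith.of_le_mul_dist fun x y => h x x.2 y y.2
  calc dimH A = dimH (((↑) : A → X) '' univ) := by rw [image_univ, Subtype.range_coe]
    _ = dimH (univ : Set A) := isometry_subtype_coe.dimH_image univ
    _ ≤ dimH (A.domRestrict p '' univ) := hanti.le_dimH_image univ
    _ = dimH (p '' A) := by rw [image_univ, range_domRestrict]

theorem dimH_univ_complex : dimH (univ : Set ℂ) = 2 := by
  rw [Real.dimH_univ_eq_finrank, Complex.finrank_real_complex, Nat.cast_ofNat]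

theorem dimH_prod_inter_preimage_singleton_le {X Y Z : Type*} [MetricSpace X] [MetricSpace Y]
    [PseudoMetricSpace Z] {F : X × Y → Z} {A : Set X} {B : Set Y} {K C : ℝ≥0}
    (hlip : ∀ w ∈ B, LipschitzOnWith K (fun z => F (z, w)) A)
    (hanti : ∀ z ∈ A, ∀ w ∈ B, ∀ w' ∈ B, dist w w' ≤ C * dist (F (z, w)) (F (z, w'))) (v : Z) :
    dimH (A ×ˢ B ∩ F ⁻¹' {v}) ≤ dimH A := by
  refine (dimH_le_dimH_image_of_dist_le_mul (p := Prod.fst) (K := 1 + C * K) ?_).trans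
    (dimH_mono (image_subset_iff.mpr fun y hy => hy.1.1))
  rintro ⟨z, w⟩ ⟨⟨hz, hw⟩, hv⟩ ⟨z', w'⟩ ⟨⟨hz', hw'⟩, hv'⟩
  simp only [mem_preimage, mem_singleton_iff] at hv hv'
  have hsnd : dist w w' ≤ C * K * dist z z' := by
    calc dist w w' ≤ C * dist (F (z, w)) (F (z, w')) := hanti z hz w hw w' hw'
      _ = C * dist (F (z, w')) (F (z', w')) := by rw [hv, hv', dist_comm]
      _ ≤ C * (K * dist z z') := by gcongr; exact (hlip w' hw').dist_le_mul z hz z' hz'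
      _ = C * K * dist z z' := by ring
  rw [Prod.dist_eq, NNReal.coe_add, NNReal.coe_one, NNReal.coe_mul]
  exact max_le (le_mul_of_one_le_left dist_nonneg (le_add_of_nonneg_right (by positivity)))
    (hsnd.trans (by gcongr; exact le_add_of_nonneg_left zero_le_one))

theorem measure_closedBall_le_of_forall_measure_ball_le {X : Type*} [PseudoMetricSpace X]
    [MeasurableSpace X] (ν : Measure X) {x : X} {s r₀ : ℝ}
    (h : ∀ r ∈ Ioo 0 r₀, ν (ball x r) ≤ ENNReal.ofReal r ^ s) {d : ℝ} (hd : d ∈ Ico 0 r₀) :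
    ν (closedBall x d) ≤ ENNReal.ofReal d ^ s := by
  have hcont : Tendsto (fun r => ENNReal.ofReal r ^ s) (𝓝[>] d) (𝓝 (ENNReal.ofReal d ^ s)) :=
    ((ENNReal.continuous_rpow_const.comp ENNReal.continuous_ofReal).tendsto d).mono_left
      nhdsWithin_le_nhds
  refine ge_of_tendsto hcont ?_
  filter_upwards [Ioo_mem_nhdsGT hd.2] with r hr
  exact (measure_mono (closedBall_subset_ball hr.1)).trans (h r ⟨hd.1.trans_lt hr.1, hr.2⟩)

theorem restrict_le_hausdorffMeasure_of_forall_measure_ball_le {X : Type*} [MetricSpace X]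
    [MeasurableSpace X] [BorelSpace X] (ν : Measure X) {s r₀ : ℝ} (hr₀ : 0 < r₀) {B : Set X}
    (hB : ∀ x ∈ B, ∀ r ∈ Ioo 0 r₀, ν (ball x r) ≤ ENNReal.ofReal r ^ s) :
    ν.restrict B ≤ μH[s] := by
  refine Measure.le_hausdorffMeasure s _ (ENNReal.ofReal (r₀ / 2)) (by simpa using hr₀)
    fun t ht => ?_
  have htop : ediam (closure t) ≠ ⊤ := by
    rw [ediam_closure]; exact ne_top_of_le_ne_top ENNReal.ofReal_ne_top ht
  have hdiam : diam t < r₀ :=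
    (ENNReal.toReal_le_of_le_ofReal (by positivity) ht).trans_lt (by linarith)
  calc ν.restrict B t ≤ ν.restrict B (closure t) := measure_mono subset_closure
    _ = ν (closure t ∩ B) := Measure.restrict_apply isClosed_closure.measurableSet
    _ ≤ ediam t ^ s := by
      rcases (closure t ∩ B).eq_empty_or_nonempty with he | ⟨x, hxt, hxB⟩
      · simp [he]
      have hball : closure t ∩ B ⊆ closedBall x (diam t) := fun y hy => by
        rw [mem_closedBall, ← diam_closure]
        exact dist_le_diam_of_mem' htop hy.1 hxt
      calc ν (closure t ∩ B) ≤ ν (closedBall x (diam t)) := measure_mono hball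
        _ ≤ ENNReal.ofReal (diam t) ^ s :=
          measure_closedBall_le_of_forall_measure_ball_le ν (hB x hxB) ⟨diam_nonneg, hdiam⟩
        _ = ediam t ^ s := by
          rw [diam, ENNReal.ofReal_toReal (by rwa [ediam_closure] at htop)]

theorem measure_eq_zero_of_hausdorffMeasure_eq_zero {X : Type*} [MetricSpace X]
    [MeasurableSpace X] [BorelSpace X] (ν : Measure X) {s : ℝ} {A : Set X}
    (hν : ∀ x ∈ A, ∀ᶠ r in 𝓝[>] (0 : ℝ), ν (ball x r) ≤ ENNReal.ofReal r ^ s)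
    (hA : μH[s] A = 0) : ν A = 0 := by
  set B : ℕ → Set X := fun n =>
    {x ∈ A | ∀ r ∈ Ioo 0 (1 / ((n : ℝ) + 1)), ν (ball x r) ≤ ENNReal.ofReal r ^ s}
  have hcover : A ⊆ ⋃ n, B n := by
    intro x hx
    obtain ⟨u, hu, hsub⟩ := mem_nhdsGT_iff_exists_Ioo_subset.mp (hν x hx)
    obtain ⟨n, hn⟩ := exists_nat_one_div_lt (mem_Ioi.mp hu)
    exact mem_iUnion.mpr ⟨n, hx, fun r hr => hsub ⟨hr.1, hr.2.trans hn⟩⟩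
  have hB : ∀ n, ν (B n) = 0 := fun n => by
    refine le_antisymm ?_ zero_le
    calc ν (B n) = ν.restrict (B n) (B n) := (Measure.restrict_apply_self _ _).symm
      _ ≤ μH[s] (B n) :=
        restrict_le_hausdorffMeasure_of_forall_measure_ball_le ν (by positivity)
          (fun x hx => hx.2) _
      _ ≤ μH[s] A := measure_mono fun x hx => hx.1
      _ = 0 := hA
  exact measure_mono_null hcover (measure_iUnion_null hB)

theorem absolutelyContinuous_hausdorffMeasure_of_ae_eventually_measure_ball_le {X : Type*}
    [MetricSpace X] [MeasurableSpace X] [BorelSpace X] (ν : Measure X) {s : ℝ}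
    (hν : ∀ᵐ x ∂ν, ∀ᶠ r in 𝓝[>] (0 : ℝ), ν (ball x r) ≤ ENNReal.ofReal r ^ s) : ν ≪ μH[s] := by
  intro A hA
  set G := {x | ∀ᶠ r in 𝓝[>] (0 : ℝ), ν (ball x r) ≤ ENNReal.ofReal r ^ s}
  have hgood : ν (A ∩ G) = 0 := measure_eq_zero_of_hausdorffMeasure_eq_zero ν (fun x hx => hx.2)
    (measure_mono_null inter_subset_left hA)
  refine measure_mono_null (fun x hx => ?_) (measure_union_null hgood (ae_iff.mp hν))
  by_cases hxG : x ∈ G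
  · exact Or.inl ⟨hx, hxG⟩
  · exact Or.inr hxG

theorem eventually_measure_ball_le_rpow_of_lt_liminf {X : Type*} [PseudoMetricSpace X]
    [MeasurableSpace X] (ν : Measure X) {x : X} {s : ℝ} (hs : 0 < s)
    (hx : s < liminf (fun r : ℝ => Real.log (ν (ball x r)).toReal / Real.log r) (𝓝[>] 0)) :
    ∀ᶠ r in 𝓝[>] (0 : ℝ), ν (ball x r) ≤ ENNReal.ofReal r ^ s := by
  -- an unbounded-below `liminf` in `ℝ` is the junk value `0`, which `hx` excludes
  have hbdd : IsBoundedUnder (· ≥ ·) (𝓝[>] (0 : ℝ))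
      (fun r : ℝ => Real.log (ν (ball x r)).toReal / Real.log r) := by
    by_contra hunb
    rw [Real.liminf_of_not_isBoundedUnder hunb] at hx
    linarith
  filter_upwards [eventually_lt_of_lt_liminf hx hbdd, Ioo_mem_nhdsGT zero_lt_one]
    with r hr hr01
  have hlog : Real.log r < 0 := Real.log_neg hr01.1 hr01.2
  have hmass : Real.log (ν (ball x r)).toReal < Real.log (r ^ s) := by
    rw [Real.log_rpow hr01.1]
    exact (lt_div_iff_of_neg hlog).mp hr
  have hpos : 0 < (ν (ball x r)).toReal := by
    refine lt_of_le_of_ne ENNReal.toReal_nonneg fun h0 => ?_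
    rw [← h0, Real.log_zero, Real.log_rpow hr01.1] at hmass
    nlinarith
  rw [← ENNReal.ofReal_toReal (ENNReal.toReal_pos_iff.mp hpos).2.ne,
    ENNReal.ofReal_rpow_of_nonneg hr01.1.le hs.le]
  exact ENNReal.ofReal_le_ofReal
    ((Real.log_lt_log_iff hpos (Real.rpow_pos_of_pos hr01.1 s)).mp hmass).le

section OneVariable

theorem Convex.mul_norm_sub_le_norm_image_sub {𝕜 G : Type*} [RCLike 𝕜] [NormedAddCommGroup G]
    [NormedSpace 𝕜 G] {f f' : 𝕜 → G} {s : Set 𝕜} {d : G} {ε : ℝ}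
    (hf : ∀ x ∈ s, HasDerivWithinAt f (f' x) s x) (hf' : ∀ x ∈ s, ‖f' x - d‖ ≤ ε)
    (hs : Convex ℝ s) {x y : 𝕜} (hx : x ∈ s) (hy : y ∈ s) :
    (‖d‖ - ε) * ‖y - x‖ ≤ ‖f y - f x‖ := by
  have hg : ∀ x ∈ s, HasDerivWithinAt (fun x => f x - x • d) (f' x - d) s x := fun x hx => by
    simpa using (hf x hx).fun_sub ((hasDerivWithinAt_id x s).smul_const d)
  have hmvt := hs.norm_image_sub_le_of_norm_hasDerivWithin_le hg hf' hx hy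
  have hsplit : (y - x) • d = (f y - f x) - ((f y - y • d) - (f x - x • d)) := by
    rw [sub_smul]; abel
  have := norm_sub_le (f y - f x) ((f y - y • d) - (f x - x • d))
  rw [← hsplit, norm_smul] at this
  nlinarith

variable {F : Type*} [NormedAddCommGroup F] [NormedSpace ℂ F] [CompleteSpace F]

theorem norm_iteratedDeriv_le_of_forall_mem_ball_norm_le {f : ℂ → F} {c : ℂ} {r A : ℝ}
    (hr : 0 < r) (hf : DifferentiableOn ℂ f (ball c (2 * r)))
    (hA : ∀ z ∈ ball c (2 * r), ‖f z‖ ≤ A) (n : ℕ) {w : ℂ} (hw : w ∈ ball c r) :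
    ‖iteratedDeriv n f w‖ ≤ n.factorial * A / r ^ n := by
  have hsub : closedBall w r ⊆ ball c (2 * r) :=
    closedBall_subset_ball' (by linarith [mem_ball.mp hw])
  exact Complex.norm_iteratedDeriv_le_of_forall_mem_sphere_norm_le n hr
    (hf.diffContOnCl_ball hsub) fun z hz => hA z (hsub (sphere_subset_closedBall hz))

theorem norm_sub_le_of_forall_mem_ball_norm_le {f : ℂ → F} {c : ℂ} {r A : ℝ}
    (hr : 0 < r) (hf : DifferentiableOn ℂ f (ball c (2 * r)))
    (hA : ∀ z ∈ ball c (2 * r), ‖f z‖ ≤ A) {z z' : ℂ} (hz : z ∈ ball c r) (hz' : z' ∈ ball c r) :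
    ‖f z - f z'‖ ≤ A / r * ‖z - z'‖ := by
  have hball : ball c r ⊆ ball c (2 * r) := ball_subset_ball (by linarith)
  refine Convex.norm_image_sub_le_of_norm_hasDerivWithin_le (f' := deriv f)
    (fun w hw => ?_) (fun w hw => ?_) (convex_ball c r) hz' hz
  · exact ((hf.differentiableAt (isOpen_ball.mem_nhds (hball hw))).hasDerivAt).hasDerivWithinAt
  · simpa using norm_iteratedDeriv_le_of_forall_mem_ball_norm_le hr hf hA 1 hw

theorem DifferentiableOn.eqOn_zero_ball_of_eventuallyEq_zero {f : ℂ → F} {c : ℂ} {r : ℝ}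
    (hf : DifferentiableOn ℂ f (ball c r)) {z₀ : ℂ} (hz₀ : z₀ ∈ ball c r) (hfz₀ : f =ᶠ[𝓝 z₀] 0) :
    EqOn f 0 (ball c r) :=
  (hf.analyticOnNhd isOpen_ball).eqOn_zero_of_preconnected_of_eventuallyEq_zero
    (convex_ball c r).isPreconnected hz₀ hfz₀

theorem countable_setOf_eq_zero_of_analyticOnNhd {𝕜 : Type*} [NontriviallyNormedField 𝕜]
    [SecondCountableTopology 𝕜] {E : Type*} [NormedAddCommGroup E] [NormedSpace 𝕜 E]
    {f : 𝕜 → E} {U : Set 𝕜} (hf : AnalyticOnNhd 𝕜 f U) (hU : IsPreconnected U)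
    (hne : ¬ EqOn f 0 U) : {z ∈ U | f z = 0}.Countable := by
  have hcod := mem_codiscreteWithin.mp
    ((hf.eqOn_zero_or_eventually_ne_zero_of_preconnected hU).resolve_left hne)
  have hzeros : U \ {z | f z ≠ 0} = {z ∈ U | f z = 0} := by ext; simp
  refine (HereditarilyLindelofSpace.isLindelof _).countable_of_isDiscrete
    (isDiscrete_iff_nhdsNE.mpr fun z hz => ?_)
  simpa only [hzeros, disjoint_iff] using hcod z hz.1

end OneVariable

theorem ball_eq_prod {α β : Type*} [PseudoMetricSpace α] [PseudoMetricSpace β] (x : α × β)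
    (r : ℝ) : ball x r = ball x.1 r ×ˢ ball x.2 r :=
  (ball_prod_same x.1 x.2 r).symm

section TwoVariables

variable {f : ℂ × ℂ → ℂ} {x : ℂ × ℂ} {r : ℝ}

theorem DifferentiableOn.along_snd (hf : DifferentiableOn ℂ f (ball x r)) {z : ℂ}
    (hz : z ∈ ball x.1 r) : DifferentiableOn ℂ (fun w => f (z, w)) (ball x.2 r) :=
  hf.comp ((differentiableOn_const z).prodMk differentiableOn_id) fun _ hw =>
    (ball_eq_prod x r).superset ⟨hz, hw⟩

theorem DifferentiableOn.along_fst (hf : DifferentiableOn ℂ f (ball x r)) {w : ℂ}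
    (hw : w ∈ ball x.2 r) : DifferentiableOn ℂ (fun z => f (z, w)) (ball x.1 r) :=
  hf.comp (differentiableOn_id.prodMk (differentiableOn_const w)) fun _ hz =>
    (ball_eq_prod x r).superset ⟨hz, hw⟩

noncomputable def iteratedDerivSnd (n : ℕ) (f : ℂ × ℂ → ℂ) (y : ℂ × ℂ) : ℂ :=
  iteratedDeriv n (fun w => f (y.1, w)) y.2

theorem hasDerivAt_iteratedDerivSnd (hf : DifferentiableOn ℂ f (ball x r)) (n : ℕ)
    {y : ℂ × ℂ} (hy : y ∈ ball x r) :
    HasDerivAt (fun w => iteratedDerivSnd n f (y.1, w)) (iteratedDerivSnd (n + 1) f y) y.2 := by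
  obtain ⟨hy₁, hy₂⟩ := (ball_eq_prod x r).subset hy
  have hiter : AnalyticOnNhd ℂ (iteratedDeriv n fun w => f (y.1, w)) (ball x.2 r) := by
    rw [iteratedDeriv_eq_iterate]
    exact ((hf.along_snd hy₁).analyticOnNhd isOpen_ball).iterated_deriv n
  rw [iteratedDerivSnd, iteratedDeriv_succ]
  exact (hiter y.2 hy₂).differentiableAt.hasDerivAt

theorem exists_lipschitzOnWith_iteratedDerivSnd (hr : 0 < r)
    (hf : DifferentiableOn ℂ f (closedBall x (2 * r))) (n : ℕ) :
    ∃ K : ℝ≥0, ∀ w ∈ ball x.2 r,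
      LipschitzOnWith K (fun z => iteratedDerivSnd n f (z, w)) (ball x.1 r) := by
  obtain ⟨M, hM⟩ := (isCompact_closedBall x (2 * r)).exists_bound_of_continuousOn hf.continuousOn
  have hf' : DifferentiableOn ℂ f (ball x (2 * r)) := hf.mono ball_subset_closedBall
  have hr2 : ∀ c : ℂ, ball c r ⊆ ball c (2 * r) := fun c => ball_subset_ball (by linarith)
  refine ⟨Real.toNNReal (n.factorial * (M / r) / r ^ n), fun w hw =>
    LipschitzOnWith.of_dist_le' fun z hz z' hz' => ?_⟩
  have hslice : ∀ ζ ∈ ball x.1 r, ContDiffAt ℂ n (fun ω => f (ζ, ω)) w := fun ζ hζ =>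
    ((hf'.along_snd (hr2 _ hζ)).contDiffOn isOpen_ball).contDiffAt
      (isOpen_ball.mem_nhds (hr2 _ hw))
  have hlip : ∀ ω ∈ ball x.2 (2 * r), ‖f (z, ω) - f (z', ω)‖ ≤ M / r * ‖z - z'‖ :=
    fun ω hω => norm_sub_le_of_forall_mem_ball_norm_le hr (hf'.along_fst hω)
      (fun ζ hζ => hM _ (ball_subset_closedBall ((ball_eq_prod x _).superset ⟨hζ, hω⟩))) hz hz'
  have hcauchy := norm_iteratedDeriv_le_of_forall_mem_ball_norm_le hr
    ((hf'.along_snd (hr2 _ hz)).sub (hf'.along_snd (hr2 _ hz'))) hlip n hw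
  rw [dist_eq_norm, dist_eq_norm]
  calc ‖iteratedDerivSnd n f (z, w) - iteratedDerivSnd n f (z', w)‖
      = ‖iteratedDeriv n ((fun ω => f (z, ω)) - fun ω => f (z', ω)) w‖ := by
        rw [iteratedDeriv_sub (hslice z hz) (hslice z' hz')]; rfl
    _ ≤ n.factorial * (M / r * ‖z - z'‖) / r ^ n := hcauchy
    _ = n.factorial * (M / r) / r ^ n * ‖z - z'‖ := by ring

theorem continuousOn_iteratedDerivSnd (hr : 0 < r)
    (hf : DifferentiableOn ℂ f (closedBall x (2 * r))) (n : ℕ) :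
    ContinuousOn (iteratedDerivSnd n f) (ball x r) := by
  obtain ⟨K, hK⟩ := exists_lipschitzOnWith_iteratedDerivSnd hr hf n
  rw [ball_eq_prod]
  refine continuousOn_prod_of_continuousOn_lipschitzOnWith _ K (fun z hz w hw => ?_) hK
  have hy : (z, w) ∈ ball x (2 * r) := (ball_eq_prod x _).superset
    ⟨ball_subset_ball (by linarith) hz, ball_subset_ball (by linarith) hw⟩
  exact (hasDerivAt_iteratedDerivSnd (hf.mono ball_subset_closedBall) n hy).continuousAt
    |>.continuousWithinAt

theorem exists_mem_nhds_dimH_inter_zeros_iteratedDerivSnd_le (hr : 0 < r)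
    (hf : DifferentiableOn ℂ f (closedBall x (2 * r))) {n : ℕ} {y₀ : ℂ × ℂ}
    (hy₀ : y₀ ∈ ball x r) (hd : iteratedDerivSnd (n + 1) f y₀ ≠ 0) :
    ∃ t ∈ 𝓝 y₀, dimH (t ∩ iteratedDerivSnd n f ⁻¹' {0}) ≤ 2 := by
  set d := iteratedDerivSnd (n + 1) f y₀
  have hd₀ : 0 < ‖d‖ := norm_pos_iff.mpr hd
  have hnear : ∀ᶠ u in 𝓝 y₀, u ∈ ball x r ∧ iteratedDerivSnd (n + 1) f u ∈ ball d (‖d‖ / 2) :=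
    (isOpen_ball.eventually_mem hy₀).and <|
      ((continuousOn_iteratedDerivSnd hr hf (n + 1)).continuousAt
        (isOpen_ball.mem_nhds hy₀)).eventually (ball_mem_nhds d (by positivity))
  obtain ⟨δ, hδ, hball⟩ := Metric.eventually_nhds_iff_ball.mp hnear
  have hsub : ball y₀.1 δ ⊆ ball x.1 r ∧ ball y₀.2 δ ⊆ ball x.2 r := by
    have h : ball y₀ δ ⊆ ball x r := fun u hu => (hball u hu).1
    rw [ball_eq_prod, ball_eq_prod x, prod_subset_prod_iff] at h
    exact h.resolve_right (by simp [not_le.mpr hδ])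
  obtain ⟨K, hK⟩ := exists_lipschitzOnWith_iteratedDerivSnd hr hf n
  have hexpand : ∀ z ∈ ball y₀.1 δ, ∀ w ∈ ball y₀.2 δ, ∀ w' ∈ ball y₀.2 δ,
      dist w w' ≤ (2 / ‖d‖₊ : ℝ≥0) *
        dist (iteratedDerivSnd n f (z, w)) (iteratedDerivSnd n f (z, w')) := by
    intro z hz w hw w' hw'
    have hmem : ∀ ω ∈ ball y₀.2 δ, (z, ω) ∈ ball y₀ δ := fun ω hω =>
      (ball_eq_prod y₀ δ).superset ⟨hz, hω⟩
    have hderiv : ∀ ω ∈ ball y₀.2 δ, HasDerivWithinAt (fun ω => iteratedDerivSnd n f (z, ω))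
        (iteratedDerivSnd (n + 1) f (z, ω)) (ball y₀.2 δ) ω := fun ω hω =>
      (hasDerivAt_iteratedDerivSnd (hf.mono ball_subset_closedBall) n
        (ball_subset_ball (by linarith) (hball _ (hmem ω hω)).1)).hasDerivWithinAt
    have key := Convex.mul_norm_sub_le_norm_image_sub (d := d) (ε := ‖d‖ / 2) hderiv
      (fun ω hω => (mem_ball_iff_norm.mp (hball _ (hmem ω hω)).2).le)
      (convex_ball _ _) hw' hw
    rw [NNReal.coe_div, NNReal.coe_ofNat, coe_nnnorm, dist_eq_norm, dist_eq_norm,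
      div_mul_eq_mul_div, le_div_iff₀ hd₀]
    linarith
  refine ⟨ball y₀ δ, ball_mem_nhds y₀ hδ, ?_⟩
  rw [ball_eq_prod]
  calc dimH (ball y₀.1 δ ×ˢ ball y₀.2 δ ∩ iteratedDerivSnd n f ⁻¹' {0})
      ≤ dimH (ball y₀.1 δ) := dimH_prod_inter_preimage_singleton_le
        (fun w hw => (hK w (hsub.2 hw)).mono hsub.1) hexpand 0
    _ ≤ 2 := (dimH_mono (subset_univ _)).trans_eq dimH_univ_complex

theorem dimH_ball_inter_zeros_le_two (hr : 0 < r)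
    (hf : DifferentiableOn ℂ f (closedBall x (2 * r))) {p : ℂ × ℂ} (hp : p ∈ ball x r)
    (hfp : f p ≠ 0) : dimH (ball x r ∩ f ⁻¹' {0}) ≤ 2 := by
  have hf' : DifferentiableOn ℂ f (ball x r) :=
    hf.mono ((ball_subset_ball (by linarith)).trans ball_subset_closedBall)
  rw [ball_eq_prod] at hp
  set V := {z ∈ ball x.1 r | f (z, p.2) = 0}
  set W : ℕ → Set (ℂ × ℂ) := fun n =>
    ball x r ∩ {u | iteratedDerivSnd n f u = 0 ∧ iteratedDerivSnd (n + 1) f u ≠ 0}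
  have hV : V.Countable :=
    countable_setOf_eq_zero_of_analyticOnNhd ((hf'.along_fst hp.2).analyticOnNhd isOpen_ball)
      (convex_ball _ _).isPreconnected fun h0 => hfp (h0 hp.1)
  have hcover : ball x r ∩ f ⁻¹' {0} ⊆ (⋃ z ∈ V, ({z} : Set ℂ) ×ˢ univ) ∪ ⋃ n, W n := by
    rintro y ⟨hy, hy0⟩
    obtain ⟨hy₁, hy₂⟩ := (ball_eq_prod x r).subset hy
    by_cases hord : analyticOrderAt (fun w => f (y.1, w)) y.2 = ⊤
    · have hzero := (hf'.along_snd hy₁).eqOn_zero_ball_of_eventuallyEq_zero hy₂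
        (analyticOrderAt_eq_top.mp hord)
      exact Or.inl (mem_biUnion ⟨hy₁, hzero hp.2⟩ ⟨rfl, mem_univ _⟩)
    obtain ⟨m, hm⟩ := ENat.ne_top_iff_exists.mp hord
    have hg := (hf'.along_snd hy₁).analyticOnNhd isOpen_ball y.2 hy₂
    obtain ⟨hlt, hne⟩ := (analyticOrderAt_eq_nat_iff_iteratedDeriv_eq_zero hg).mp hm.symm
    cases m with
    | zero => exact absurd hy0 (by simpa using hne)
    | succ n => exact Or.inr (mem_iUnion.mpr ⟨n, hy, hlt n n.lt_succ_self, hne⟩)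
  have hVdim : dimH (⋃ z ∈ V, ({z} : Set ℂ) ×ˢ (univ : Set ℂ)) ≤ 2 := by
    rw [dimH_bUnion hV]
    refine iSup₂_le fun z _ => (dimH_le_dimH_image_of_dist_le_mul (p := Prod.snd) (K := 1) ?_).trans
      ((dimH_mono (subset_univ _)).trans_eq dimH_univ_complex)
    rintro ⟨a, b⟩ ⟨ha, -⟩ ⟨a', b'⟩ ⟨ha', -⟩
    simp only [mem_singleton_iff] at ha ha'
    simp [Prod.dist_eq, ha, ha']
  have hWdim : ∀ n, dimH (W n) ≤ 2 := fun n => dimH_le_of_forall_exists_nhdsWithin fun u hu => by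
    obtain ⟨t, ht, htdim⟩ := exists_mem_nhds_dimH_inter_zeros_iteratedDerivSnd_le hr hf hu.1 hu.2.2
    refine ⟨W n ∩ t, inter_mem_nhdsWithin _ ht, (dimH_mono ?_).trans htdim⟩
    exact fun v hv => ⟨hv.2, hv.1.2.1⟩
  calc dimH (ball x r ∩ f ⁻¹' {0})
      ≤ dimH ((⋃ z ∈ V, ({z} : Set ℂ) ×ˢ univ) ∪ ⋃ n, W n) := dimH_mono hcover
    _ ≤ 2 := by
      rw [dimH_union, dimH_iUnion W]
      exact max_le hVdim (iSup_le hWdim)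

theorem eqOn_zero_polydisc_of_eventuallyEq_zero (hf : DifferentiableOn ℂ f (ball x r))
    {p : ℂ × ℂ} (hp : p ∈ ball x r) (hfp : f =ᶠ[𝓝 p] 0) : EqOn f 0 (ball x r) := by
  obtain ⟨σ, hσ, hzero⟩ := Metric.eventually_nhds_iff_ball.mp
    (hfp.and (isOpen_ball.eventually_mem hp))
  simp only [ball_eq_prod, mem_prod, Pi.zero_apply] at hp hzero
  have hhoriz : ∀ w ∈ ball p.2 σ, ∀ z ∈ ball x.1 r, f (z, w) = 0 := fun w hw =>
    (hf.along_fst (hzero (p.1, w) ⟨mem_ball_self hσ, hw⟩).2.2).eqOn_zero_ball_of_eventuallyEq_zero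
      hp.1 (eventually_of_mem (ball_mem_nhds p.1 hσ) fun ζ hζ => (hzero (ζ, w) ⟨hζ, hw⟩).1)
  intro u hu
  obtain ⟨hu₁, hu₂⟩ := (ball_eq_prod x r).subset hu
  exact (hf.along_snd hu₁).eqOn_zero_ball_of_eventuallyEq_zero hp.2
    (eventually_of_mem (ball_mem_nhds p.2 hσ) fun ω hω => hhoriz ω hω u.1 hu₁) hu₂

theorem not_eventuallyEq_zero_of_isPreconnected {U : Set (ℂ × ℂ)} (hUo : IsOpen U)
    (hUc : IsPreconnected U) (hf : DifferentiableOn ℂ f U) {x₀ : ℂ × ℂ} (hx₀ : x₀ ∈ U)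
    (hfx₀ : f x₀ ≠ 0) {y : ℂ × ℂ} (hy : y ∈ U) : ¬ f =ᶠ[𝓝 y] 0 := by
  intro hy0
  have hclosed : closure {v | f =ᶠ[𝓝 v] 0} ∩ U ⊆ {v | f =ᶠ[𝓝 v] 0} := by
    rintro v ⟨hvcl, hvU⟩
    obtain ⟨ρ, hρ, hρU⟩ := Metric.isOpen_iff.mp hUo v hvU
    obtain ⟨p, hp, hpv⟩ := Metric.mem_closure_iff.mp hvcl ρ hρ
    have hzero := eqOn_zero_polydisc_of_eventuallyEq_zero (hf.mono hρU)
      (mem_ball_comm.mp hpv) hp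
    filter_upwards [isOpen_ball.mem_nhds (mem_ball_self hρ)] with u hu using hzero hu
  have hsub := hUc.subset_of_closure_inter_subset isOpen_setOfPred_eventually_nhds ⟨y, hy, hy0⟩
    hclosed
  exact hfx₀ (hsub hx₀).self_of_nhds

theorem dimH_zeros_le_two {U : Set (ℂ × ℂ)} (hUo : IsOpen U) (hf : DifferentiableOn ℂ f U)
    (hnz : ∀ y ∈ U, ¬ f =ᶠ[𝓝 y] 0) : dimH {y ∈ U | f y = 0} ≤ 2 := by
  refine dimH_le_of_forall_exists_nhdsWithin fun y hy => ?_
  obtain ⟨ε, hε, hεU⟩ := nhds_basis_closedBall.mem_iff.mp (hUo.mem_nhds hy.1)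
  have hr : 0 < ε / 2 := by linarith
  obtain ⟨p, hp, hfp⟩ : ∃ p ∈ ball y (ε / 2), f p ≠ 0 := by
    by_contra! h
    exact hnz y hy.1 (Filter.mem_of_superset (ball_mem_nhds y hr) h)
  refine ⟨{y ∈ U | f y = 0} ∩ ball y (ε / 2), inter_mem_nhdsWithin _ (ball_mem_nhds y hr), ?_⟩
  refine (dimH_mono ?_).trans (dimH_ball_inter_zeros_le_two hr (hf.mono ?_) hp hfp)
  · exact fun u hu => ⟨hu.2, hu.1.2⟩
  · rwa [mul_div_cancel₀ ε two_ne_zero]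

end TwoVariables

theorem holomorphic_vanishes_of_positive_measure_zero_set_general
    (ν : Measure (ℂ × ℂ)) (γ : ℝ) (hγ : 2 < γ)
    (hdim : ∀ᵐ x ∂ν, γ ≤
      liminf (fun r : ℝ => Real.log (ν (Metric.ball x r)).toReal / Real.log r)
        (nhdsWithin 0 (Set.Ioi 0)))
    (U : Set (ℂ × ℂ)) (hUopen : IsOpen U) (hUconn : IsConnected U)
    (h : ℂ × ℂ → ℂ) (hhol : DifferentiableOn ℂ h U)
    (hpos : 0 < ν {x ∈ U | h x = 0}) :
    ∀ x ∈ U, h x = 0 := by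
  by_contra! hne
  obtain ⟨x₀, hx₀, hx₀ne⟩ := hne
  obtain ⟨s, hs2, hsγ⟩ : ∃ s : ℝ≥0, 2 < (s : ℝ) ∧ (s : ℝ) < γ :=
    ⟨((2 + γ) / 2).toNNReal, by rw [Real.coe_toNNReal _ (by linarith)]; constructor <;> linarith⟩
  have hac : ν ≪ μH[s] := absolutelyContinuous_hausdorffMeasure_of_ae_eventually_measure_ball_le ν
    (hdim.mono fun x hx => eventually_measure_ball_le_rpow_of_lt_liminf ν (by linarith)
      (hsγ.trans_le hx))
  have hZ : dimH {x ∈ U | h x = 0} ≤ 2 := dimH_zeros_le_two hUopen hhol fun y hy =>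
    not_eventuallyEq_zero_of_isPreconnected hUopen hUconn.isPreconnected hhol hx₀ hx₀ne hy
  exact hpos.ne' (measure_zero_of_dimH_lt hac (hZ.trans_lt (by exact_mod_cast hs2)))

/-- Vanishing criterion: if a finite Borel measure `ν` on `ℂ²` has pointwise lower
dimension `≥ γ > 2` at `ν`-almost every point, and a holomorphic function `h` on a
connected open set `U` vanishes on a set of positive `ν`-measure, then `h ≡ 0` on `U`. -/
theorem holomorphic_vanishes_of_positive_measure_zero_set
    (ν : Measure (ℂ × ℂ)) [IsFiniteMeasure ν] (γ : ℝ) (hγ : 2 < γ)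
    (hdim : ∀ᵐ x ∂ν, γ ≤
      liminf (fun r : ℝ => Real.log (ν (Metric.ball x r)).toReal / Real.log r)
        (nhdsWithin 0 (Set.Ioi 0)))
    (U : Set (ℂ × ℂ)) (hUopen : IsOpen U) (hUconn : IsConnected U)
    (h : ℂ × ℂ → ℂ) (hhol : DifferentiableOn ℂ h U)
    (hpos : 0 < ν {x ∈ U | h x = 0}) :
    ∀ x ∈ U, h x = 0 :=
  holomorphic_vanishes_of_positive_measure_zero_set_general ν γ hγ hdim U hUopen hUconn h hhol hpos
end

section
/- Let $\mu, \lambda, \mu_1^a, \mu_2^a$ be finite positive Borel measures on an open set $U$, $\Lambda'$ a signed measure, and $\alpha, \gamma$ bounded Borel functions on $U$, such that: (i) $\mu_2^a = |\alpha|^2 \lambda + \Lambda' + \rho$ where $\rho$ is a positive measure absolutely continuous with respect to $\mu$; (ii) $\mu_1^a \ll \mu$ and $\mu_2^a \ll \mu$; (iii) $|\Lambda'(A)| \leq C \sqrt{\mu_1^a(A)} \sqrt{\lambda(A)}$ for all Borel $A$ and some constant $C > 0$; (iv) $\lambda = h_1 \mu + \mu_1^s$ with $h_1 \in L^1(\mu)$,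 $h_1 \geq 0$, and $\mu_1^s \perp \mu$. Then $\int_A |\alpha|^2 \, d\mu_1^s = 0$ for every Borel set $A \subset U$; equivalently $\alpha = 0$ $\mu_1^s$-almost everywhere. -/
/-!
Let `T` be a `μ`-null set carrying `μ₁ˢ`. Every measure absolutely continuous with respect to `μ`
vanishes on `T`, and so does `Λ'` by the Cauchy–Schwarz bound, since `μ₁ᵃ T = 0`. Evaluating the
decomposition of `μ₂ᵃ` on `T` leaves `∫_T |α|² dλ = 0`, and `λ` restricted to `T` is `μ₁ˢ`.
Hence `∫ |α|² dμ₁ˢ = 0`, so `α = 0` `μ₁ˢ`-almost everywhere.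
-/

open MeasureTheory

namespace MeasureTheory

variable {X : Type*} [MeasurableSpace X]

lemma Measure.MutuallySingular.restrict_compl_nullSet_add {μ κ ν : Measure X}
    (h : ν ⟂ₘ μ) (hκ : κ ≪ μ) : (κ + ν).restrict h.nullSetᶜ = ν := by
  rw [Measure.restrict_add, Measure.restrict_eq_zero.mpr (hκ h.measure_compl_nullSet), zero_add]
  exact Measure.restrict_eq_self_of_ae_mem (measure_eq_zero_iff_ae_notMem.mp h.measure_nullSet)

lemma ae_eq_zero_of_integral_norm_sq_eq_zero {E : Type*} [NormedAddCommGroup E]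
    {ν : Measure X} [IsFiniteMeasure ν] {α : X → E} (hα : AEStronglyMeasurable α ν) {M : ℝ}
    (hM : ∀ x, ‖α x‖ ≤ M) (h : ∫ x, ‖α x‖ ^ 2 ∂ν = 0) : α =ᵐ[ν] 0 := by
  have hint : Integrable (fun x ↦ ‖α x‖ ^ 2) ν :=
    .of_bound (hα.norm.pow 2) (M ^ 2) (.of_forall fun x ↦ by
      rw [Real.norm_of_nonneg (by positivity)]
      exact pow_le_pow_left₀ (norm_nonneg _) (hM x) 2)
  filter_upwards [(integral_eq_zero_iff_of_nonneg (fun x ↦ by positivity) hint).mp h] with x hx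
  simpa using hx

end MeasureTheory

theorem alpha_vanishes_on_singular_part_general
    {X : Type*} [MeasurableSpace X]
    (μ lam μ₁a μ₂a ρ μ₁s : Measure X)
    [IsFiniteMeasure μ₁s]
    (Λ' : SignedMeasure X) (α : X → ℂ) (hαmeas : Measurable α)
    (hαbdd : ∃ M : ℝ, ∀ x, ‖α x‖ ≤ M)
    (h₁ : X → ENNReal)
    (hdec : ∀ A : Set X, MeasurableSet A →
      (μ₂a A).toReal = (∫ x in A, ‖α x‖ ^ 2 ∂lam) + Λ' A + (ρ A).toReal)
    (hρac : ρ ≪ μ) (hac₁ : μ₁a ≪ μ) (hac₂ : μ₂a ≪ μ)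
    (C : ℝ)
    (hCS : ∀ A : Set X, MeasurableSet A →
      |Λ' A| ≤ C * Real.sqrt (μ₁a A).toReal * Real.sqrt (lam A).toReal)
    (hlam : lam = μ.withDensity h₁ + μ₁s) (hsing : μ₁s.MutuallySingular μ) :
    (∀ A : Set X, MeasurableSet A → (∫ x in A, ‖α x‖ ^ 2 ∂μ₁s) = 0)
    ∧ ∀ᵐ x ∂μ₁s, α x = 0 := by
  obtain ⟨M, hM⟩ := hαbdd
  set T := hsing.nullSetᶜ
  have hT : MeasurableSet T := hsing.measurableSet_nullSet.compl
  have hμT : μ T = 0 := hsing.measure_compl_nullSet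
  have hΛT : Λ' T = 0 := by
    simpa [hac₁ hμT] using hCS T hT
  have hlamT : lam.restrict T = μ₁s := by
    rw [hlam]
    exact hsing.restrict_compl_nullSet_add (withDensity_absolutelyContinuous μ h₁)
  have hsq : ∫ x, ‖α x‖ ^ 2 ∂μ₁s = 0 := by
    have := hdec T hT
    rw [hac₂ hμT, hρac hμT, hΛT, hlamT] at this
    simpa using this.symm
  have hα0 : α =ᵐ[μ₁s] 0 :=
    ae_eq_zero_of_integral_norm_sq_eq_zero hαmeas.aestronglyMeasurable hM hsq
  refine ⟨fun A _ ↦ integral_eq_zero_of_ae ?_, hα0⟩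
  filter_upwards [ae_restrict_of_ae hα0] with x hx
  simp [hx]

/-- Core computation of the Patching Theorem: with `μ₂ᵃ = |α|²·λ + Λ' + ρ` where
`ρ ≪ μ`, `μ₁ᵃ ≪ μ`, `μ₂ᵃ ≪ μ`, a Cauchy–Schwarz bound `|Λ'(A)| ≤ C √μ₁ᵃ(A) √λ(A)`,
and `λ = h₁·μ + μ₁ˢ` with `μ₁ˢ ⟂ μ`, the function `α` vanishes `μ₁ˢ`-a.e., i.e.
`∫_A |α|² dμ₁ˢ = 0` for every Borel set `A`. -/
theorem alpha_vanishes_on_singular_part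
    {X : Type*} [MeasurableSpace X]
    (μ lam μ₁a μ₂a ρ μ₁s : Measure X)
    [IsFiniteMeasure μ] [IsFiniteMeasure lam] [IsFiniteMeasure μ₁a]
    [IsFiniteMeasure μ₂a] [IsFiniteMeasure ρ] [IsFiniteMeasure μ₁s]
    (Λ' : SignedMeasure X) (α : X → ℂ) (hαmeas : Measurable α)
    (hαbdd : ∃ M : ℝ, ∀ x, ‖α x‖ ≤ M)
    (h₁ : X → ENNReal) (hh₁ : Measurable h₁)
    (hdec : ∀ A : Set X, MeasurableSet A →
      (μ₂a A).toReal = (∫ x in A, ‖α x‖ ^ 2 ∂lam) + Λ' A + (ρ A).toReal)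
    (hρac : ρ ≪ μ) (hac₁ : μ₁a ≪ μ) (hac₂ : μ₂a ≪ μ)
    (C : ℝ) (hC : 0 < C)
    (hCS : ∀ A : Set X, MeasurableSet A →
      |Λ' A| ≤ C * Real.sqrt (μ₁a A).toReal * Real.sqrt (lam A).toReal)
    (hlam : lam = μ.withDensity h₁ + μ₁s) (hsing : μ₁s.MutuallySingular μ) :
    (∀ A : Set X, MeasurableSet A → (∫ x in A, ‖α x‖ ^ 2 ∂μ₁s) = 0)
    ∧ ∀ᵐ x ∂μ₁s, α x = 0 :=
  alpha_vanishes_on_singular_part_general μ lam μ₁a μ₂a ρ μ₁s Λ' α hαmeas hαbdd h₁ hdec hρac hac₁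
    hac₂ C hCS hlam hsing
end
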